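/- Let p_1, p_2 ∈ ℝ[x,y]_2 be binary quadratic forms, let λ_1, λ_2 ∈ ℝ, and set h = λ_1·p_1 + λ_2·p_2. Then the linear subspace of the 9-dimensional space ℝ[x,y]_8 of binary octics spanned by the set {(p_1³ + λ_1·h³)·g : g ∈ ℝ[x,y]_2} ∪ {(p_2³ + λ_2·h³)·g : g ∈ ℝ[x,y]_2} ∪ {h³·p_1, h³·p_2} has dimension at most 7. Consequently, the set of binary octics of the form p_1⁴ + p_2⁴ + (λ_1 p_1 + λ_2 p_2)⁴ has codimension at least 2 in ℝ[x,y]_8. -/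

import Mathlib

open MvPolynomial

private lemma fin2_degree (d : Fin 2 →₀ ℕ) : d.degree = d 0 + d 1 := by
  rw [Finsupp.degree_apply,
    Finset.sum_subset (Finset.subset_univ d.support)
      (fun i _ hi => Finsupp.notMem_support_iff.mp hi)]
  exact Fin.sum_univ_two _

private lemma repr2 (g : MvPolynomial (Fin 2) ℝ) (hg : g.IsHomogeneous 2) :
    ∃ a b c : ℝ, g = C a * X 0 ^ 2 + C b * (X 0 * X 1) + C c * X 1 ^ 2 := by
  refine ⟨coeff (Finsupp.single 0 2) g, coeff (Finsupp.single 0 1 + Finsupp.single 1 1) g,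
    coeff (Finsupp.single 1 2) g, ?_⟩
  have hXX : (X 0 * X 1 : MvPolynomial (Fin 2) ℝ)
      = monomial (Finsupp.single 0 1 + Finsupp.single 1 1) 1 := by
    rw [show (X 0 : MvPolynomial (Fin 2) ℝ) = X 0 ^ 1 by ring,
      show (X 1 : MvPolynomial (Fin 2) ℝ) = X 1 ^ 1 by ring,
      X_pow_eq_monomial, X_pow_eq_monomial, monomial_mul, one_mul]
  rw [X_pow_eq_monomial, X_pow_eq_monomial, hXX, C_mul_monomial, C_mul_monomial,
    C_mul_monomial, mul_one, mul_one, mul_one]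
  apply MvPolynomial.ext
  intro d
  have hd2 : d = Finsupp.single 0 (d 0) + Finsupp.single 1 (d 1) := by
    ext i; fin_cases i <;> simp
  simp only [coeff_add, coeff_monomial]
  by_cases hdeg : d 0 + d 1 = 2
  · have : (d 0 = 2 ∧ d 1 = 0) ∨ (d 0 = 1 ∧ d 1 = 1) ∨ (d 0 = 0 ∧ d 1 = 2) := by omega
    rcases this with ⟨h0, h1⟩ | ⟨h0, h1⟩ | ⟨h0, h1⟩ <;>
      rw [hd2, h0, h1] <;> norm_num <;>
      rw [if_neg (by intro hcontra; have := DFunLike.congr_fun hcontra 1; simp at this),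
        if_neg (by intro hcontra; have := DFunLike.congr_fun hcontra 1; simp at this)] <;>
      ring
  · have key : ∀ e : Fin 2 →₀ ℕ, e 0 + e 1 = 2 → e ≠ d := by
      intro e he h
      subst h
      exact hdeg he
    rw [hg.coeff_eq_zero (by rw [fin2_degree]; exact hdeg),
      if_neg (key _ (by simp)), if_neg (key _ (by simp)), if_neg (key _ (by simp))]
    norm_num

private lemma mul_mem_span (P : MvPolynomial (Fin 2) ℝ) (g : MvPolynomial (Fin 2) ℝ)
    (hg : g.IsHomogeneous 2) (M : Submodule ℝ (MvPolynomial (Fin 2) ℝ))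
    (h1 : P * X 0 ^ 2 ∈ M) (h2 : P * (X 0 * X 1) ∈ M) (h3 : P * X 1 ^ 2 ∈ M) :
    P * g ∈ M := by
  obtain ⟨a, b, c, rfl⟩ := repr2 g hg
  have key : P * (C a * X 0 ^ 2 + C b * (X 0 * X 1) + C c * X 1 ^ 2)
      = a • (P * X 0 ^ 2) + b • (P * (X 0 * X 1)) + c • (P * X 1 ^ 2) := by
    simp only [smul_eq_C_mul]; ring
  rw [key]
  exact add_mem (add_mem (M.smul_mem a h1) (M.smul_mem b h2)) (M.smul_mem c h3)

private lemma homog_comb {p₁ p₂ : MvPolynomial (Fin 2) ℝ}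
    (hp₁ : p₁.IsHomogeneous 2) (hp₂ : p₂.IsHomogeneous 2) (u v : ℝ) :
    (u • p₁ + v • p₂).IsHomogeneous 2 := by
  rw [smul_eq_C_mul, smul_eq_C_mul]
  exact (hp₁.C_mul u).add (hp₂.C_mul v)

private lemma masterSmul (p₁ p₂ : MvPolynomial (Fin 2) ℝ) (t₁ t₂ : ℝ) :
    (p₁ ^ 3 + t₁ • (t₁ • p₁ + t₂ • p₂) ^ 3) * ((t₁ ^ 4) • p₁ + (2 * t₁ ^ 3 * t₂) • p₂)
      - (p₂ ^ 3 + t₂ • (t₁ • p₁ + t₂ • p₂) ^ 3) * ((2 * t₁ * t₂ ^ 3) • p₁ + (t₂ ^ 4) • p₂)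
    = (t₁ * (1 + t₁ ^ 4 - 2 * t₂ ^ 4)) • ((t₁ • p₁ + t₂ • p₂) ^ 3 * p₁)
      + (-(t₂ * (1 - 2 * t₁ ^ 4 + t₂ ^ 4))) • ((t₁ • p₁ + t₂ • p₂) ^ 3 * p₂) := by
  simp only [smul_eq_C_mul, map_mul, map_add, map_sub, map_pow, map_neg, map_one, map_ofNat]
  ring

private lemma reduction (p₁ p₂ : MvPolynomial (Fin 2) ℝ) (t₁ t₂ : ℝ)
    (b : Fin 7 → MvPolynomial (Fin 2) ℝ)
    (hA : ∀ g : MvPolynomial (Fin 2) ℝ, g.IsHomogeneous 2 →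
      (p₁ ^ 3 + t₁ • (t₁ • p₁ + t₂ • p₂) ^ 3) * g ∈ Submodule.span ℝ (Set.range b))
    (hB : ∀ g : MvPolynomial (Fin 2) ℝ, g.IsHomogeneous 2 →
      (p₂ ^ 3 + t₂ • (t₁ • p₁ + t₂ • p₂) ^ 3) * g ∈ Submodule.span ℝ (Set.range b))
    (h1 : (t₁ • p₁ + t₂ • p₂) ^ 3 * p₁ ∈ Submodule.span ℝ (Set.range b))
    (h2 : (t₁ • p₁ + t₂ • p₂) ^ 3 * p₂ ∈ Submodule.span ℝ (Set.range b)) :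
    Module.finrank ℝ
      (Submodule.span ℝ
        ({f : MvPolynomial (Fin 2) ℝ | ∃ g : MvPolynomial (Fin 2) ℝ, g.IsHomogeneous 2 ∧
            (f = (p₁ ^ 3 + t₁ • (t₁ • p₁ + t₂ • p₂) ^ 3) * g ∨
             f = (p₂ ^ 3 + t₂ • (t₁ • p₁ + t₂ • p₂) ^ 3) * g)} ∪
          {(t₁ • p₁ + t₂ • p₂) ^ 3 * p₁, (t₁ • p₁ + t₂ • p₂) ^ 3 * p₂})) ≤ 7 := by
  have hle : Submodule.span ℝ
      ({f : MvPolynomial (Fin 2) ℝ | ∃ g : MvPolynomial (Fin 2) ℝ, g.IsHomogeneous 2 ∧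
          (f = (p₁ ^ 3 + t₁ • (t₁ • p₁ + t₂ • p₂) ^ 3) * g ∨
           f = (p₂ ^ 3 + t₂ • (t₁ • p₁ + t₂ • p₂) ^ 3) * g)} ∪
        {(t₁ • p₁ + t₂ • p₂) ^ 3 * p₁, (t₁ • p₁ + t₂ • p₂) ^ 3 * p₂})
      ≤ Submodule.span ℝ (Set.range b) := by
    rw [Submodule.span_le]
    intro f hf
    simp only [Set.mem_union, Set.mem_setOf_eq, Set.mem_insert_iff,
      Set.mem_singleton_iff] at hf
    rcases hf with ⟨g, hg, rfl | rfl⟩ | rfl | rfl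
    · exact hA g hg
    · exact hB g hg
    · exact h1
    · exact h2
  haveI : FiniteDimensional ℝ (Submodule.span ℝ (Set.range b)) :=
    FiniteDimensional.span_of_finite ℝ (Set.finite_range b)
  refine le_trans (Submodule.finrank_mono hle) ?_
  have := finrank_range_le_card (R := ℝ) b
  simpa [Set.finrank] using this

set_option maxHeartbeats 1000000

/-- For binary quadratics `p₁, p₂` and scalars `t₁, t₂`, with
`h = t₁·p₁ + t₂·p₂`, the subspace of the 9-dimensional space of binary octics spanned by
`{(p₁³ + t₁·h³)·g : g quadratic} ∪ {(p₂³ + t₂·h³)·g : g quadratic} ∪ {h³·p₁, h³·p₂}`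
(the image of the differential of `(p₁,p₂,t₁,t₂) ↦ p₁⁴ + p₂⁴ + (t₁p₁+t₂p₂)⁴`)
has dimension at most 7; consequently the set of octics of the form
`p₁⁴ + p₂⁴ + (t₁p₁+t₂p₂)⁴` has codimension at least 2. -/
theorem differential_image_dim_le_seven (p₁ p₂ : MvPolynomial (Fin 2) ℝ)
    (hp₁ : p₁.IsHomogeneous 2) (hp₂ : p₂.IsHomogeneous 2) (t₁ t₂ : ℝ) :
    Module.finrank ℝ
      (Submodule.span ℝ
        ({f : MvPolynomial (Fin 2) ℝ | ∃ g : MvPolynomial (Fin 2) ℝ, g.IsHomogeneous 2 ∧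
            (f = (p₁ ^ 3 + t₁ • (t₁ • p₁ + t₂ • p₂) ^ 3) * g ∨
             f = (p₂ ^ 3 + t₂ • (t₁ • p₁ + t₂ • p₂) ^ 3) * g)} ∪
          {(t₁ • p₁ + t₂ • p₂) ^ 3 * p₁, (t₁ • p₁ + t₂ • p₂) ^ 3 * p₂})) ≤ 7 := by
  by_cases ht₂ : t₂ = 0
  · subst ht₂
    set A := p₁ ^ 3 + t₁ • (t₁ • p₁ + (0:ℝ) • p₂) ^ 3 with hA
    set B := p₂ ^ 3 + (0:ℝ) • (t₁ • p₁ + (0:ℝ) • p₂) ^ 3 with hB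
    refine reduction p₁ p₂ t₁ 0
      ![A * X 0 ^ 2, A * (X 0 * X 1), A * X 1 ^ 2,
        B * X 0 ^ 2, B * (X 0 * X 1), B * X 1 ^ 2, 0] ?_ ?_ ?_ ?_
    · intro g hg
      exact mul_mem_span _ g hg _ (Submodule.subset_span ⟨0, rfl⟩)
        (Submodule.subset_span ⟨1, rfl⟩) (Submodule.subset_span ⟨2, rfl⟩)
    · intro g hg
      exact mul_mem_span _ g hg _ (Submodule.subset_span ⟨3, rfl⟩)
        (Submodule.subset_span ⟨4, rfl⟩) (Submodule.subset_span ⟨5, rfl⟩)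
    · have hr : t₁ ^ 3 / (1 + t₁ ^ 4) * (1 + t₁ ^ 4) = t₁ ^ 3 :=
        div_mul_cancel₀ _ (by positivity)
      have hc := congrArg (C (σ := Fin 2) (R := ℝ)) hr
      simp only [map_mul, map_add, map_pow, map_one] at hc
      have key : (t₁ • p₁ + (0:ℝ) • p₂) ^ 3 * p₁ = (t₁ ^ 3 / (1 + t₁ ^ 4)) • (A * p₁) := by
        rw [hA]
        simp only [smul_eq_C_mul, map_zero, zero_mul, add_zero]
        linear_combination (-(p₁ ^ 4)) * hc
      rw [key]
      exact Submodule.smul_mem _ _ (mul_mem_span _ p₁ hp₁ _ (Submodule.subset_span ⟨0, rfl⟩)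
        (Submodule.subset_span ⟨1, rfl⟩) (Submodule.subset_span ⟨2, rfl⟩))
    · have hr : t₁ ^ 3 / (1 + t₁ ^ 4) * (1 + t₁ ^ 4) = t₁ ^ 3 :=
        div_mul_cancel₀ _ (by positivity)
      have hc := congrArg (C (σ := Fin 2) (R := ℝ)) hr
      simp only [map_mul, map_add, map_pow, map_one] at hc
      have key : (t₁ • p₁ + (0:ℝ) • p₂) ^ 3 * p₂ = (t₁ ^ 3 / (1 + t₁ ^ 4)) • (A * p₂) := by
        rw [hA]
        simp only [smul_eq_C_mul, map_zero, zero_mul, add_zero]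
        linear_combination (-(p₁ ^ 3 * p₂)) * hc
      rw [key]
      exact Submodule.smul_mem _ _ (mul_mem_span _ p₂ hp₂ _ (Submodule.subset_span ⟨0, rfl⟩)
        (Submodule.subset_span ⟨1, rfl⟩) (Submodule.subset_span ⟨2, rfl⟩))
  by_cases ht₁ : t₁ = 0
  · subst ht₁
    set A := p₁ ^ 3 + (0:ℝ) • ((0:ℝ) • p₁ + t₂ • p₂) ^ 3 with hA
    set B := p₂ ^ 3 + t₂ • ((0:ℝ) • p₁ + t₂ • p₂) ^ 3 with hB
    refine reduction p₁ p₂ 0 t₂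
      ![A * X 0 ^ 2, A * (X 0 * X 1), A * X 1 ^ 2,
        B * X 0 ^ 2, B * (X 0 * X 1), B * X 1 ^ 2, 0] ?_ ?_ ?_ ?_
    · intro g hg
      exact mul_mem_span _ g hg _ (Submodule.subset_span ⟨0, rfl⟩)
        (Submodule.subset_span ⟨1, rfl⟩) (Submodule.subset_span ⟨2, rfl⟩)
    · intro g hg
      exact mul_mem_span _ g hg _ (Submodule.subset_span ⟨3, rfl⟩)
        (Submodule.subset_span ⟨4, rfl⟩) (Submodule.subset_span ⟨5, rfl⟩)
    · have hr : t₂ ^ 3 / (1 + t₂ ^ 4) * (1 + t₂ ^ 4) = t₂ ^ 3 :=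
        div_mul_cancel₀ _ (by positivity)
      have hc := congrArg (C (σ := Fin 2) (R := ℝ)) hr
      simp only [map_mul, map_add, map_pow, map_one] at hc
      have key : ((0:ℝ) • p₁ + t₂ • p₂) ^ 3 * p₁ = (t₂ ^ 3 / (1 + t₂ ^ 4)) • (B * p₁) := by
        rw [hB]
        simp only [smul_eq_C_mul, map_zero, zero_mul, zero_add]
        linear_combination (-(p₂ ^ 3 * p₁)) * hc
      rw [key]
      exact Submodule.smul_mem _ _ (mul_mem_span _ p₁ hp₁ _ (Submodule.subset_span ⟨3, rfl⟩)
        (Submodule.subset_span ⟨4, rfl⟩) (Submodule.subset_span ⟨5, rfl⟩))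
    · have hr : t₂ ^ 3 / (1 + t₂ ^ 4) * (1 + t₂ ^ 4) = t₂ ^ 3 :=
        div_mul_cancel₀ _ (by positivity)
      have hc := congrArg (C (σ := Fin 2) (R := ℝ)) hr
      simp only [map_mul, map_add, map_pow, map_one] at hc
      have key : ((0:ℝ) • p₁ + t₂ • p₂) ^ 3 * p₂ = (t₂ ^ 3 / (1 + t₂ ^ 4)) • (B * p₂) := by
        rw [hB]
        simp only [smul_eq_C_mul, map_zero, zero_mul, zero_add]
        linear_combination (-(p₂ ^ 4)) * hc
      rw [key]
      exact Submodule.smul_mem _ _ (mul_mem_span _ p₂ hp₂ _ (Submodule.subset_span ⟨3, rfl⟩)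
        (Submodule.subset_span ⟨4, rfl⟩) (Submodule.subset_span ⟨5, rfl⟩))
    -- main case : t₁ ≠ 0 and t₂ ≠ 0
  set H := t₁ • p₁ + t₂ • p₂ with hH
  set A := p₁ ^ 3 + t₁ • H ^ 3 with hA
  set B := p₂ ^ 3 + t₂ • H ^ 3 with hB
  have hg₁h : ((t₁ ^ 4) • p₁ + (2 * t₁ ^ 3 * t₂) • p₂ : MvPolynomial (Fin 2) ℝ).IsHomogeneous 2 :=
    homog_comb hp₁ hp₂ _ _
  have hg₂h : ((2 * t₁ * t₂ ^ 3) • p₁ + (t₂ ^ 4) • p₂ : MvPolynomial (Fin 2) ℝ).IsHomogeneous 2 :=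
    homog_comb hp₁ hp₂ _ _
  set G₁ := (t₁ ^ 4) • p₁ + (2 * t₁ ^ 3 * t₂) • p₂ with hG₁
  set G₂ := (2 * t₁ * t₂ ^ 3) • p₁ + (t₂ ^ 4) • p₂ with hG₂
  have hm := masterSmul p₁ p₂ t₁ t₂
  rw [← hH, ← hA, ← hB, ← hG₁, ← hG₂] at hm
  by_cases hd₂ : t₂ * (1 - 2 * t₁ ^ 4 + t₂ ^ 4) = 0
  · by_cases hd₁ : t₁ * (1 + t₁ ^ 4 - 2 * t₂ ^ 4) = 0
    · -- both relation coefficients vanish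
      have e1 : 1 + t₁ ^ 4 - 2 * t₂ ^ 4 = 0 := by
        rcases mul_eq_zero.mp hd₁ with hz | hz
        · exact absurd hz ht₁
        · exact hz
      have e2 : 1 - 2 * t₁ ^ 4 + t₂ ^ 4 = 0 := by
        rcases mul_eq_zero.mp hd₂ with hz | hz
        · exact absurd hz ht₂
        · exact hz
      have h14 : t₁ ^ 4 = 1 := by linarith
      have h24 : t₂ ^ 4 = 1 := by linarith
      have hc14 : (C t₁ : MvPolynomial (Fin 2) ℝ) ^ 4 = 1 := by
        rw [← map_pow, h14, map_one]
      have hc24 : (C t₂ : MvPolynomial (Fin 2) ℝ) ^ 4 = 1 := by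
        rw [← map_pow, h24, map_one]
      rw [e1, e2] at hm
      simp only [mul_zero, neg_zero, zero_smul, add_zero] at hm
      have hAB : A * G₁ = B * G₂ := sub_eq_zero.mp hm
      by_cases hg₁0 : G₁ = (0 : MvPolynomial (Fin 2) ℝ)
      · -- G₁ = 0 : degenerate case, p₁ is a multiple of p₂
        rw [hG₁, h14, one_smul] at hg₁0
        have hp₁eq : p₁ = -((2 * t₁ ^ 3 * t₂) • p₂) := eq_neg_of_add_eq_zero_left hg₁0
        have hB0 : B = 0 := by
          rw [hB, hH, hp₁eq]
          simp only [smul_eq_C_mul, map_neg, map_mul, map_pow, map_ofNat]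
          linear_combination (p₂ ^ 3 * (1 - 6 * (C t₁ : MvPolynomial (Fin 2) ℝ) ^ 4 +
              12 * (C t₁) ^ 8 - 8 * (C t₁) ^ 12)) * hc24 +
            (p₂ ^ 3 * (-8 * (C t₁ : MvPolynomial (Fin 2) ℝ) ^ 8 + 4 * (C t₁) ^ 4 - 2)) * hc14
        refine reduction p₁ p₂ t₁ t₂
          ![A * X 0 ^ 2, A * (X 0 * X 1), A * X 1 ^ 2, 0, 0, 0, 0] ?_ ?_ ?_ ?_
        · intro g hg
          exact mul_mem_span _ g hg _ (Submodule.subset_span ⟨0, rfl⟩)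
            (Submodule.subset_span ⟨1, rfl⟩) (Submodule.subset_span ⟨2, rfl⟩)
        · intro g hg
          rw [← hH, ← hB, hB0, zero_mul]
          exact zero_mem _
        · have key9 : (9 : ℝ) • (H ^ 3 * p₁) = (-(2 * t₁ ^ 2 * t₂)) • (A * p₂) := by
            rw [hA, hH, hp₁eq]
            simp only [smul_eq_C_mul, map_neg, map_mul, map_pow, map_ofNat]
            linear_combination (p₂ ^ 4 * (-16 * (C t₁ : MvPolynomial (Fin 2) ℝ) ^ 3 *
              (C t₂) ^ 4) * (-8 * (C t₁) ^ 8 + 5 * (C t₁) ^ 4 - 1)) * hc14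
          have hstep : H ^ 3 * p₁ = (9 : ℝ)⁻¹ • ((9 : ℝ) • (H ^ 3 * p₁)) := by
            rw [smul_smul]; norm_num
          rw [← hH, hstep, key9]
          exact Submodule.smul_mem _ _ (Submodule.smul_mem _ _
            (mul_mem_span _ p₂ hp₂ _ (Submodule.subset_span ⟨0, rfl⟩)
              (Submodule.subset_span ⟨1, rfl⟩) (Submodule.subset_span ⟨2, rfl⟩)))
        · have key9 : (9 : ℝ) • (H ^ 3 * p₂) = (t₁ ^ 3) • (A * p₂) := by
            rw [hA, hH, hp₁eq]
            simp only [smul_eq_C_mul, map_neg, map_mul, map_pow, map_ofNat]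
            linear_combination (p₂ ^ 4 * (C t₂ : MvPolynomial (Fin 2) ℝ) ^ 3 *
              (8 * (C t₁) ^ 12 - 68 * (C t₁) ^ 8 + 46 * (C t₁) ^ 4 - 9)) * hc14
          have hstep : H ^ 3 * p₂ = (9 : ℝ)⁻¹ • ((9 : ℝ) • (H ^ 3 * p₂)) := by
            rw [smul_smul]; norm_num
          rw [← hH, hstep, key9]
          exact Submodule.smul_mem _ _ (Submodule.smul_mem _ _
            (mul_mem_span _ p₂ hp₂ _ (Submodule.subset_span ⟨0, rfl⟩)
              (Submodule.subset_span ⟨1, rfl⟩) (Submodule.subset_span ⟨2, rfl⟩)))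
      · -- G₁ ≠ 0
        obtain ⟨a, b, c, hr⟩ := repr2 _ hg₁h
        by_cases ha : a = 0
        · by_cases hb : b = 0
          · have hc : c ≠ 0 := by
              intro hc0
              apply hg₁0
              rw [hr, ha, hb, hc0]
              simp
            refine reduction p₁ p₂ t₁ t₂
              ![A * X 0 ^ 2, A * (X 0 * X 1), B * X 0 ^ 2, B * (X 0 * X 1),
                B * X 1 ^ 2, H ^ 3 * p₁, H ^ 3 * p₂] ?_ ?_
                (Submodule.subset_span ⟨5, rfl⟩) (Submodule.subset_span ⟨6, rfl⟩)
            · intro g hg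
              have hAy2 : A * X 1 ^ 2 ∈ Submodule.span ℝ (Set.range
                  ![A * X 0 ^ 2, A * (X 0 * X 1), B * X 0 ^ 2, B * (X 0 * X 1),
                    B * X 1 ^ 2, H ^ 3 * p₁, H ^ 3 * p₂]) := by
                have hkey : c • (A * X 1 ^ 2) = A * G₁
                    - a • (A * X 0 ^ 2) - b • (A * (X 0 * X 1)) := by
                  rw [hr]
                  simp only [smul_eq_C_mul]
                  ring
                have hmem : c • (A * X 1 ^ 2) ∈ Submodule.span ℝ (Set.range
                    ![A * X 0 ^ 2, A * (X 0 * X 1), B * X 0 ^ 2, B * (X 0 * X 1),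
                      B * X 1 ^ 2, H ^ 3 * p₁, H ^ 3 * p₂]) := by
                  rw [hkey, hAB]
                  exact sub_mem (sub_mem (mul_mem_span _ _ hg₂h _
                      (Submodule.subset_span ⟨2, rfl⟩) (Submodule.subset_span ⟨3, rfl⟩)
                      (Submodule.subset_span ⟨4, rfl⟩))
                    (Submodule.smul_mem _ _ (Submodule.subset_span ⟨0, rfl⟩)))
                    (Submodule.smul_mem _ _ (Submodule.subset_span ⟨1, rfl⟩))
                have hstep : A * X 1 ^ 2 = c⁻¹ • (c • (A * X 1 ^ 2)) := by
                  rw [smul_smul, inv_mul_cancel₀ hc, one_smul]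
                rw [hstep]
                exact Submodule.smul_mem _ _ hmem
              exact mul_mem_span _ g hg _ (Submodule.subset_span ⟨0, rfl⟩)
                (Submodule.subset_span ⟨1, rfl⟩) hAy2
            · intro g hg
              exact mul_mem_span _ g hg _ (Submodule.subset_span ⟨2, rfl⟩)
                (Submodule.subset_span ⟨3, rfl⟩) (Submodule.subset_span ⟨4, rfl⟩)
          · refine reduction p₁ p₂ t₁ t₂
              ![A * X 0 ^ 2, A * X 1 ^ 2, B * X 0 ^ 2, B * (X 0 * X 1),
                B * X 1 ^ 2, H ^ 3 * p₁, H ^ 3 * p₂] ?_ ?_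
                (Submodule.subset_span ⟨5, rfl⟩) (Submodule.subset_span ⟨6, rfl⟩)
            · intro g hg
              have hAxy : A * (X 0 * X 1) ∈ Submodule.span ℝ (Set.range
                  ![A * X 0 ^ 2, A * X 1 ^ 2, B * X 0 ^ 2, B * (X 0 * X 1),
                    B * X 1 ^ 2, H ^ 3 * p₁, H ^ 3 * p₂]) := by
                have hkey : b • (A * (X 0 * X 1)) = A * G₁
                    - a • (A * X 0 ^ 2) - c • (A * X 1 ^ 2) := by
                  rw [hr]
                  simp only [smul_eq_C_mul]
                  ring
                have hmem : b • (A * (X 0 * X 1)) ∈ Submodule.span ℝ (Set.range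
                    ![A * X 0 ^ 2, A * X 1 ^ 2, B * X 0 ^ 2, B * (X 0 * X 1),
                      B * X 1 ^ 2, H ^ 3 * p₁, H ^ 3 * p₂]) := by
                  rw [hkey, hAB]
                  exact sub_mem (sub_mem (mul_mem_span _ _ hg₂h _
                      (Submodule.subset_span ⟨2, rfl⟩) (Submodule.subset_span ⟨3, rfl⟩)
                      (Submodule.subset_span ⟨4, rfl⟩))
                    (Submodule.smul_mem _ _ (Submodule.subset_span ⟨0, rfl⟩)))
                    (Submodule.smul_mem _ _ (Submodule.subset_span ⟨1, rfl⟩))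
                have hstep : A * (X 0 * X 1) = b⁻¹ • (b • (A * (X 0 * X 1))) := by
                  rw [smul_smul, inv_mul_cancel₀ hb, one_smul]
                rw [hstep]
                exact Submodule.smul_mem _ _ hmem
              exact mul_mem_span _ g hg _ (Submodule.subset_span ⟨0, rfl⟩) hAxy
                (Submodule.subset_span ⟨1, rfl⟩)
            · intro g hg
              exact mul_mem_span _ g hg _ (Submodule.subset_span ⟨2, rfl⟩)
                (Submodule.subset_span ⟨3, rfl⟩) (Submodule.subset_span ⟨4, rfl⟩)
        · refine reduction p₁ p₂ t₁ t₂
            ![A * (X 0 * X 1), A * X 1 ^ 2, B * X 0 ^ 2, B * (X 0 * X 1),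
              B * X 1 ^ 2, H ^ 3 * p₁, H ^ 3 * p₂] ?_ ?_
              (Submodule.subset_span ⟨5, rfl⟩) (Submodule.subset_span ⟨6, rfl⟩)
          · intro g hg
            have hAx2 : A * X 0 ^ 2 ∈ Submodule.span ℝ (Set.range
                ![A * (X 0 * X 1), A * X 1 ^ 2, B * X 0 ^ 2, B * (X 0 * X 1),
                  B * X 1 ^ 2, H ^ 3 * p₁, H ^ 3 * p₂]) := by
              have hkey : a • (A * X 0 ^ 2) = A * G₁
                  - b • (A * (X 0 * X 1)) - c • (A * X 1 ^ 2) := by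
                rw [hr]
                simp only [smul_eq_C_mul]
                ring
              have hmem : a • (A * X 0 ^ 2) ∈ Submodule.span ℝ (Set.range
                  ![A * (X 0 * X 1), A * X 1 ^ 2, B * X 0 ^ 2, B * (X 0 * X 1),
                    B * X 1 ^ 2, H ^ 3 * p₁, H ^ 3 * p₂]) := by
                rw [hkey, hAB]
                exact sub_mem (sub_mem (mul_mem_span _ _ hg₂h _
                    (Submodule.subset_span ⟨2, rfl⟩) (Submodule.subset_span ⟨3, rfl⟩)
                    (Submodule.subset_span ⟨4, rfl⟩))
                  (Submodule.smul_mem _ _ (Submodule.subset_span ⟨0, rfl⟩)))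
                  (Submodule.smul_mem _ _ (Submodule.subset_span ⟨1, rfl⟩))
              have hstep : A * X 0 ^ 2 = a⁻¹ • (a • (A * X 0 ^ 2)) := by
                rw [smul_smul, inv_mul_cancel₀ ha, one_smul]
              rw [hstep]
              exact Submodule.smul_mem _ _ hmem
            exact mul_mem_span _ g hg _ hAx2 (Submodule.subset_span ⟨0, rfl⟩)
              (Submodule.subset_span ⟨1, rfl⟩)
          · intro g hg
            exact mul_mem_span _ g hg _ (Submodule.subset_span ⟨2, rfl⟩)
              (Submodule.subset_span ⟨3, rfl⟩) (Submodule.subset_span ⟨4, rfl⟩)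
    · -- d₁ ≠ 0 : can solve for H³p₁
      refine reduction p₁ p₂ t₁ t₂
        ![A * X 0 ^ 2, A * (X 0 * X 1), A * X 1 ^ 2, B * X 0 ^ 2,
          B * (X 0 * X 1), B * X 1 ^ 2, H ^ 3 * p₂] ?_ ?_ ?_
          (Submodule.subset_span ⟨6, rfl⟩)
      · intro g hg
        exact mul_mem_span _ g hg _ (Submodule.subset_span ⟨0, rfl⟩)
          (Submodule.subset_span ⟨1, rfl⟩) (Submodule.subset_span ⟨2, rfl⟩)
      · intro g hg
        exact mul_mem_span _ g hg _ (Submodule.subset_span ⟨3, rfl⟩)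
          (Submodule.subset_span ⟨4, rfl⟩) (Submodule.subset_span ⟨5, rfl⟩)
      · have hx : (t₁ * (1 + t₁ ^ 4 - 2 * t₂ ^ 4)) • (H ^ 3 * p₁)
            = (A * G₁ - B * G₂) - (-(t₂ * (1 - 2 * t₁ ^ 4 + t₂ ^ 4))) • (H ^ 3 * p₂) := by
          rw [hm]
          abel
        have hmem : (t₁ * (1 + t₁ ^ 4 - 2 * t₂ ^ 4)) • (H ^ 3 * p₁) ∈ Submodule.span ℝ (Set.range
            ![A * X 0 ^ 2, A * (X 0 * X 1), A * X 1 ^ 2, B * X 0 ^ 2,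
              B * (X 0 * X 1), B * X 1 ^ 2, H ^ 3 * p₂]) := by
          rw [hx]
          exact sub_mem (sub_mem (mul_mem_span _ _ hg₁h _ (Submodule.subset_span ⟨0, rfl⟩)
              (Submodule.subset_span ⟨1, rfl⟩) (Submodule.subset_span ⟨2, rfl⟩))
            (mul_mem_span _ _ hg₂h _ (Submodule.subset_span ⟨3, rfl⟩)
              (Submodule.subset_span ⟨4, rfl⟩) (Submodule.subset_span ⟨5, rfl⟩)))
            (Submodule.smul_mem _ _ (Submodule.subset_span ⟨6, rfl⟩))
        have hstep : H ^ 3 * p₁ = (t₁ * (1 + t₁ ^ 4 - 2 * t₂ ^ 4))⁻¹ •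
            ((t₁ * (1 + t₁ ^ 4 - 2 * t₂ ^ 4)) • (H ^ 3 * p₁)) := by
          rw [smul_smul, inv_mul_cancel₀ hd₁, one_smul]
        rw [← hH, hstep]
        exact Submodule.smul_mem _ _ hmem
  · -- d₂ ≠ 0 : can solve for H³p₂
    refine reduction p₁ p₂ t₁ t₂
      ![A * X 0 ^ 2, A * (X 0 * X 1), A * X 1 ^ 2, B * X 0 ^ 2,
        B * (X 0 * X 1), B * X 1 ^ 2, H ^ 3 * p₁] ?_ ?_
        (Submodule.subset_span ⟨6, rfl⟩) ?_
    · intro g hg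
      exact mul_mem_span _ g hg _ (Submodule.subset_span ⟨0, rfl⟩)
        (Submodule.subset_span ⟨1, rfl⟩) (Submodule.subset_span ⟨2, rfl⟩)
    · intro g hg
      exact mul_mem_span _ g hg _ (Submodule.subset_span ⟨3, rfl⟩)
        (Submodule.subset_span ⟨4, rfl⟩) (Submodule.subset_span ⟨5, rfl⟩)
    · have hd₂' : (-(t₂ * (1 - 2 * t₁ ^ 4 + t₂ ^ 4))) ≠ 0 := neg_ne_zero.mpr hd₂
      have hx : (-(t₂ * (1 - 2 * t₁ ^ 4 + t₂ ^ 4))) • (H ^ 3 * p₂)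
          = (A * G₁ - B * G₂) - (t₁ * (1 + t₁ ^ 4 - 2 * t₂ ^ 4)) • (H ^ 3 * p₁) := by
        rw [hm]
        abel
      have hmem : (-(t₂ * (1 - 2 * t₁ ^ 4 + t₂ ^ 4))) • (H ^ 3 * p₂) ∈ Submodule.span ℝ (Set.range
          ![A * X 0 ^ 2, A * (X 0 * X 1), A * X 1 ^ 2, B * X 0 ^ 2,
            B * (X 0 * X 1), B * X 1 ^ 2, H ^ 3 * p₁]) := by
        rw [hx]
        exact sub_mem (sub_mem (mul_mem_span _ _ hg₁h _ (Submodule.subset_span ⟨0, rfl⟩)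
            (Submodule.subset_span ⟨1, rfl⟩) (Submodule.subset_span ⟨2, rfl⟩))
          (mul_mem_span _ _ hg₂h _ (Submodule.subset_span ⟨3, rfl⟩)
            (Submodule.subset_span ⟨4, rfl⟩) (Submodule.subset_span ⟨5, rfl⟩)))
          (Submodule.smul_mem _ _ (Submodule.subset_span ⟨6, rfl⟩))
      have hstep : H ^ 3 * p₂ = (-(t₂ * (1 - 2 * t₁ ^ 4 + t₂ ^ 4)))⁻¹ •
          ((-(t₂ * (1 - 2 * t₁ ^ 4 + t₂ ^ 4))) • (H ^ 3 * p₂)) := by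
        rw [smul_smul, inv_mul_cancel₀ hd₂', one_smul]
      rw [← hH, hstep]
      exact Submodule.smul_mem _ _ hmem
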